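/- Let σ > 0 and let X and Y be independent Gaussian random variables with X ~ N(x̂, σ²) and Y ~ N(ŷ, σ²). Fix η > 0, σn² > 0, d > 0, x₀ ∈ ℝ, R̂ > 0, and a transmit power P > 0 satisfying ηP/((2^{R̂} − 1)σn²) > d². Then the outage probability Pr[ log₂(1 + ηP/(((X − x₀)² + Y² + d²) σn²)) < R̂ ] equals Q₁(l/σ, r/σ), where l = √((x̂ − x₀)² + ŷ²) and r = √( ηP/((2^{R̂} − 1)σn²) − d² ). -/

import Mathlib

open MeasureTheory ProbabilityTheory Real Set

/-- Modified Bessel function of the first kind, order 0 (integral representation). -/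
noncomputable def I0 (x : ℝ) : ℝ :=
  (1 / Real.pi) * ∫ θ in (0 : ℝ)..Real.pi, Real.exp (x * Real.cos θ)

/-- First-order Marcum Q-function. -/
noncomputable def marcumQ (a b : ℝ) : ℝ :=
  ∫ x in Set.Ioi b, x * Real.exp (-(x ^ 2 + a ^ 2) / 2) * I0 (a * x)

lemma I0_nonneg (x : ℝ) : 0 ≤ I0 x := by
  have h : 0 ≤ ∫ θ in (0 : ℝ)..Real.pi, Real.exp (x * Real.cos θ) :=
    intervalIntegral.integral_nonneg Real.pi_pos.le (fun θ _ => (Real.exp_pos _).le)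
  have : (0:ℝ) ≤ 1 / Real.pi := by positivity
  exact mul_nonneg this h

lemma I0_continuous : Continuous I0 := by
  unfold I0
  refine Continuous.mul continuous_const ?_
  exact intervalIntegral.continuous_parametric_intervalIntegral_of_continuous'
    (f := fun x θ => Real.exp (x * Real.cos θ)) (μ := volume)
    (by fun_prop) 0 Real.pi


lemma exp_cos_integral (c : ℝ) :
    ∫ θ in (-Real.pi)..Real.pi, Real.exp (c * Real.cos θ) = 2 * Real.pi * I0 c := by
  have hcont : Continuous fun θ : ℝ => Real.exp (c * Real.cos θ) := by fun_prop
  have h1 : ∫ θ in (-Real.pi)..(0:ℝ), Real.exp (c * Real.cos θ)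
      = ∫ θ in (0:ℝ)..Real.pi, Real.exp (c * Real.cos θ) := by
    have := intervalIntegral.integral_comp_neg (a := (0:ℝ)) (b := Real.pi)
      (fun θ => Real.exp (c * Real.cos θ))
    simp only [Real.cos_neg, neg_zero] at this
    exact this.symm
  have h2 := intervalIntegral.integral_add_adjacent_intervals
    (a := -Real.pi) (b := 0) (c := Real.pi)
    (hcont.intervalIntegrable (μ := volume) _ _) (hcont.intervalIntegrable (μ := volume) _ _)
  rw [← h2, h1, I0]
  have hπ : Real.pi ≠ 0 := Real.pi_ne_zero
  field_simp
  ring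

lemma exp_cos_sin_integral (a1 a2 : ℝ) :
    ∫ θ in (-Real.pi)..Real.pi, Real.exp (a1 * Real.cos θ + a2 * Real.sin θ)
      = 2 * Real.pi * I0 (Real.sqrt (a1 ^ 2 + a2 ^ 2)) := by
  rcases eq_or_ne (a1 ^ 2 + a2 ^ 2) 0 with h | h
  · have ha1 : a1 = 0 := by nlinarith [sq_nonneg a1, sq_nonneg a2]
    have ha2 : a2 = 0 := by nlinarith [sq_nonneg a1, sq_nonneg a2]
    subst ha1; subst ha2
    simpa using exp_cos_integral 0
  · set l := Real.sqrt (a1 ^ 2 + a2 ^ 2) with hl_def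
    have hl : 0 < l := Real.sqrt_pos.2 (lt_of_le_of_ne (by positivity) (Ne.symm h))
    set z : ℂ := ⟨a1, a2⟩ with hz_def
    have hzne : z ≠ 0 := by
      intro hz0
      apply h
      have h1 : a1 = 0 := congrArg Complex.re hz0
      have h2 : a2 = 0 := congrArg Complex.im hz0
      simp [h1, h2]
    have habs : ‖z‖ = l := by
      rw [Complex.norm_def, Complex.normSq_mk, hl_def]
      norm_num [sq]
    set φ := Complex.arg z with hφ_def
    have hcos : Real.cos φ = a1 / l := by
      rw [hφ_def, Complex.cos_arg hzne, habs]
    have hsin : Real.sin φ = a2 / l := by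
      rw [hφ_def, Complex.sin_arg, habs]
    have key : ∀ θ : ℝ, a1 * Real.cos θ + a2 * Real.sin θ = l * Real.cos (θ - φ) := by
      intro θ
      rw [Real.cos_sub, hcos, hsin]
      field_simp
    calc ∫ θ in (-Real.pi)..Real.pi, Real.exp (a1 * Real.cos θ + a2 * Real.sin θ)
        = ∫ θ in (-Real.pi)..Real.pi, Real.exp (l * Real.cos (θ - φ)) := by
          simp_rw [key]
      _ = ∫ θ in (-Real.pi - φ)..(Real.pi - φ), Real.exp (l * Real.cos θ) := by
          rw [← intervalIntegral.integral_comp_sub_right (fun θ => Real.exp (l * Real.cos θ)) φ]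
      _ = ∫ θ in (-Real.pi)..Real.pi, Real.exp (l * Real.cos θ) := by
          have hper : Function.Periodic (fun θ => Real.exp (l * Real.cos θ)) (2 * Real.pi) :=
            Real.cos_periodic.comp (fun x => Real.exp (l * x))
          have := hper.intervalIntegral_add_eq (-Real.pi - φ) (-Real.pi)
          have e1 : -Real.pi - φ + 2 * Real.pi = Real.pi - φ := by ring
          have e2 : -Real.pi + 2 * Real.pi = Real.pi := by ring
          rw [e1, e2] at this
          exact this
      _ = 2 * Real.pi * I0 l := exp_cos_integral l

lemma lintegral_polar (g : ℝ × ℝ → ENNReal) :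
    ∫⁻ p, g p = ∫⁻ p in polarCoord.target, ENNReal.ofReal p.1 * g (polarCoord.symm p) := by
  set B : ℝ × ℝ → ℝ × ℝ →L[ℝ] ℝ × ℝ := fun p =>
    LinearMap.toContinuousLinearMap (Matrix.toLin (Module.Basis.finTwoProd ℝ) (Module.Basis.finTwoProd ℝ)
      !![Real.cos p.2, -p.1 * Real.sin p.2; Real.sin p.2, p.1 * Real.cos p.2]) with hB
  have A : ∀ p ∈ polarCoord.target, HasFDerivWithinAt polarCoord.symm (B p) polarCoord.target p :=
    fun p _ => (hasFDerivAt_polarCoord_symm p).hasFDerivWithinAt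
  have B_det : ∀ p, (B p).det = p.1 := by
    intro p
    conv_rhs => rw [← one_mul p.1, ← Real.cos_sq_add_sin_sq p.2]
    simp only [hB, neg_mul, LinearMap.det_toContinuousLinearMap, LinearMap.det_toLin,
      Matrix.det_fin_two_of, sub_neg_eq_add]
    ring
  have hinj : Set.InjOn polarCoord.symm polarCoord.target := polarCoord.symm.injOn
  calc ∫⁻ p, g p = ∫⁻ p in polarCoord.source, g p := by
        rw [← setLIntegral_univ]
        exact (setLIntegral_congr polarCoord_source_ae_eq_univ).symm
    _ = ∫⁻ p in polarCoord.symm '' polarCoord.target, g p := by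
        rw [polarCoord.symm_image_target_eq_source]
    _ = ∫⁻ p in polarCoord.target, ENNReal.ofReal |(B p).det| * g (polarCoord.symm p) :=
        lintegral_image_eq_lintegral_abs_det_fderiv_mul volume
          polarCoord.open_target.measurableSet A hinj g
    _ = ∫⁻ p in polarCoord.target, ENNReal.ofReal p.1 * g (polarCoord.symm p) := by
        apply setLIntegral_congr_fun polarCoord.open_target.measurableSet
        intro p hp
        dsimp only
        rw [B_det, abs_of_pos hp.1]

lemma gaussian_prod_eq (m1 m2 : ℝ) :
    (gaussianReal m1 1).prod (gaussianReal m2 1)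
      = (volume : Measure (ℝ × ℝ)).withDensity
          (fun p => gaussianPDF m1 1 p.1 * gaussianPDF m2 1 p.2) := by
  refine Measure.prod_eq fun s t hs ht => ?_
  rw [withDensity_apply _ (hs.prod ht), Measure.volume_eq_prod, ← Measure.prod_restrict,
    lintegral_prod_mul (measurable_gaussianPDF m1 1).aemeasurable
      (measurable_gaussianPDF m2 1).aemeasurable,
    gaussianReal_of_var_ne_zero m1 one_ne_zero, gaussianReal_of_var_ne_zero m2 one_ne_zero,
    withDensity_apply _ hs, withDensity_apply _ ht]

lemma gaussian_prod_tail (m1 m2 b : ℝ) (hb : 0 < b) :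
    (((gaussianReal m1 1).prod (gaussianReal m2 1))
        {p : ℝ × ℝ | b ^ 2 < p.1 ^ 2 + p.2 ^ 2}).toReal
      = marcumQ (Real.sqrt (m1 ^ 2 + m2 ^ 2)) b := by
  set l := Real.sqrt (m1 ^ 2 + m2 ^ 2) with hl_def
  have hl0 : 0 ≤ l := Real.sqrt_nonneg _
  have hl2 : l ^ 2 = m1 ^ 2 + m2 ^ 2 := Real.sq_sqrt (by positivity)
  set S : Set (ℝ × ℝ) := {p : ℝ × ℝ | b ^ 2 < p.1 ^ 2 + p.2 ^ 2} with hS_def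
  have hSmeas : MeasurableSet S := by
    apply measurableSet_lt measurable_const
    fun_prop
  -- the real-valued joint density
  set f2 : ℝ × ℝ → ℝ := fun q => gaussianPDFReal m1 1 q.1 * gaussianPDFReal m2 1 q.2 with hf2
  -- Step 1: measure as lintegral of indicator
  have step1 : ((gaussianReal m1 1).prod (gaussianReal m2 1)) S
      = ∫⁻ p, S.indicator (fun q => ENNReal.ofReal (f2 q)) p := by
    rw [gaussian_prod_eq, withDensity_apply _ hSmeas, ← lintegral_indicator hSmeas]
    congr 1
    ext p
    rw [Set.indicator_apply, Set.indicator_apply]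
    split_ifs with h
    · rw [hf2]
      simp only [gaussianPDF]
      rw [ENNReal.ofReal_mul (gaussianPDFReal_nonneg _ _ _)]
    · rfl
  -- Step 2: polar coordinates
  rw [step1, lintegral_polar]
  -- Step 3: rewrite the integrand on the target
  have key : ∀ p : ℝ × ℝ,
      ENNReal.ofReal p.1 * S.indicator (fun q => ENNReal.ofReal (f2 q)) (polarCoord.symm p)
      = ({p : ℝ × ℝ | b ^ 2 < p.1 ^ 2} : Set (ℝ × ℝ)).indicator
          (fun p => ENNReal.ofReal p.1 * ENNReal.ofReal (f2 (polarCoord.symm p))) p := by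
    intro p
    have hmem : polarCoord.symm p ∈ S ↔ b ^ 2 < p.1 ^ 2 := by
      rw [polarCoord_symm_apply, hS_def]
      simp only [Set.mem_setOf_eq]
      constructor <;> intro h <;> nlinarith [Real.sin_sq_add_cos_sq p.2]
    rw [Set.indicator_apply, Set.indicator_apply]
    split_ifs with h1 h2 h2
    · rfl
    · exact absurd (hmem.1 h1) h2
    · exact absurd (hmem.2 h2) h1
    · exact mul_zero _
  simp_rw [key]
  have hTmeas : MeasurableSet {p : ℝ × ℝ | b ^ 2 < p.1 ^ 2} := by
    apply measurableSet_lt measurable_const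
    fun_prop
  rw [lintegral_indicator hTmeas, Measure.restrict_restrict hTmeas]
  have hsets : {p : ℝ × ℝ | b ^ 2 < p.1 ^ 2} ∩ polarCoord.target
      = Ioi b ×ˢ Ioo (-Real.pi) Real.pi := by
    rw [polarCoord_target]
    ext ⟨ρ, θ⟩
    simp only [Set.mem_inter_iff, Set.mem_setOf_eq, Set.mem_prod, Set.mem_Ioi, Set.mem_Ioo]
    constructor
    · rintro ⟨h1, h2, h3⟩
      exact ⟨by nlinarith, h3⟩
    · rintro ⟨h1, h2⟩
      exact ⟨by nlinarith, by nlinarith, h2⟩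
  rw [hsets]
  simp_rw [polarCoord_symm_apply, hf2]
  -- Step 4: Tonelli
  have hmeasF : Measurable (fun p : ℝ × ℝ => ENNReal.ofReal p.1 *
      ENNReal.ofReal (gaussianPDFReal m1 1 (p.1 * Real.cos p.2) *
        gaussianPDFReal m2 1 (p.1 * Real.sin p.2))) := by
    apply Measurable.fun_mul
    · exact measurable_fst.ennreal_ofReal
    · apply Measurable.ennreal_ofReal
      apply Measurable.fun_mul
      · exact (measurable_gaussianPDFReal m1 1).comp (by fun_prop)
      · exact (measurable_gaussianPDFReal m2 1).comp (by fun_prop)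
  rw [Measure.volume_eq_prod, ← Measure.prod_restrict, lintegral_prod _ hmeasF.aemeasurable]
  -- Step 5: inner integral
  have inner : ∀ ρ : ℝ, 0 < ρ →
      (∫⁻ θ in Ioo (-Real.pi) Real.pi, ENNReal.ofReal ρ *
        ENNReal.ofReal (gaussianPDFReal m1 1 (ρ * Real.cos θ) *
          gaussianPDFReal m2 1 (ρ * Real.sin θ)))
      = ENNReal.ofReal (ρ * Real.exp (-(ρ ^ 2 + l ^ 2) / 2) * I0 (l * ρ)) := by
    intro ρ hρ
    have hpt : ∀ θ : ℝ, gaussianPDFReal m1 1 (ρ * Real.cos θ) *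
        gaussianPDFReal m2 1 (ρ * Real.sin θ)
        = (2 * Real.pi)⁻¹ * (Real.exp (-(ρ ^ 2 + l ^ 2) / 2) *
            Real.exp ((ρ * m1) * Real.cos θ + (ρ * m2) * Real.sin θ)) := by
      intro θ
      simp only [gaussianPDFReal, NNReal.coe_one, mul_one]
      have hsqrt : (Real.sqrt (2 * Real.pi))⁻¹ * (Real.sqrt (2 * Real.pi))⁻¹
          = (2 * Real.pi)⁻¹ := by
        rw [← mul_inv, Real.mul_self_sqrt (by positivity)]
      rw [mul_mul_mul_comm, hsqrt, ← Real.exp_add, ← Real.exp_add]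
      rw [hl2]
      congr 1
      rw [Real.exp_eq_exp]
      have h := Real.sin_sq_add_cos_sq θ
      linear_combination (-(ρ ^ 2) / 2) * h
    simp_rw [hpt]
    have hexp_nn : ∀ x : ℝ, (0:ℝ) ≤ Real.exp x := fun x => (Real.exp_pos x).le
    simp_rw [ENNReal.ofReal_mul (by positivity : (0:ℝ) ≤ (2 * Real.pi)⁻¹),
      ENNReal.ofReal_mul (hexp_nn _), ← mul_assoc]
    rw [lintegral_const_mul _ (by fun_prop)]
    have hcont : Continuous fun θ : ℝ =>
        Real.exp ((ρ * m1) * Real.cos θ + (ρ * m2) * Real.sin θ) := by fun_prop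
    have hint : IntegrableOn (fun θ : ℝ =>
        Real.exp ((ρ * m1) * Real.cos θ + (ρ * m2) * Real.sin θ))
        (Ioo (-Real.pi) Real.pi) volume :=
      (hcont.integrableOn_Icc).mono_set Ioo_subset_Icc_self
    have hinner : (∫⁻ θ in Ioo (-Real.pi) Real.pi,
        ENNReal.ofReal (Real.exp ((ρ * m1) * Real.cos θ + (ρ * m2) * Real.sin θ)))
        = ENNReal.ofReal (2 * Real.pi * I0 (l * ρ)) := by
      rw [← ofReal_integral_eq_lintegral_ofReal hint (ae_of_all _ fun θ => hexp_nn _)]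
      congr 1
      rw [← integral_Ioc_eq_integral_Ioo,
        ← intervalIntegral.integral_of_le (by linarith [Real.pi_pos] : -Real.pi ≤ Real.pi),
        exp_cos_sin_integral]
      congr 2
      rw [show (ρ * m1) ^ 2 + (ρ * m2) ^ 2 = ρ ^ 2 * (m1 ^ 2 + m2 ^ 2) by ring,
        Real.sqrt_mul (sq_nonneg ρ), Real.sqrt_sq hρ.le, hl_def]
      ring
    rw [hinner, ← ENNReal.ofReal_mul (by positivity), ← ENNReal.ofReal_mul (by positivity),
      ← ENNReal.ofReal_mul (by positivity)]
    congr 1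
    field_simp
  have outer : (∫⁻ ρ in Ioi b, ∫⁻ θ in Ioo (-Real.pi) Real.pi, ENNReal.ofReal ρ *
        ENNReal.ofReal (gaussianPDFReal m1 1 (ρ * Real.cos θ) *
          gaussianPDFReal m2 1 (ρ * Real.sin θ)))
      = ∫⁻ ρ in Ioi b, ENNReal.ofReal (ρ * Real.exp (-(ρ ^ 2 + l ^ 2) / 2) * I0 (l * ρ)) := by
    apply setLIntegral_congr_fun measurableSet_Ioi
    intro ρ hρ
    exact inner ρ (hb.trans hρ)
  rw [outer]
  -- Step 6: back to a Bochner integral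
  have hFcont : Continuous fun x : ℝ => x * Real.exp (-(x ^ 2 + l ^ 2) / 2) * I0 (l * x) := by
    apply Continuous.mul
    · fun_prop
    · exact I0_continuous.comp (by fun_prop)
  have hnn : 0 ≤ᵐ[volume.restrict (Ioi b)]
      fun x : ℝ => x * Real.exp (-(x ^ 2 + l ^ 2) / 2) * I0 (l * x) := by
    filter_upwards [ae_restrict_mem measurableSet_Ioi] with x hx
    exact mul_nonneg (mul_nonneg ((hb.trans hx).le) (Real.exp_pos _).le) (I0_nonneg _)
  rw [marcumQ, integral_eq_lintegral_of_nonneg_ae hnn hFcont.aestronglyMeasurable.restrict]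

theorem stmt_14 {Ω : Type*} [MeasureSpace Ω] [IsProbabilityMeasure (ℙ : Measure Ω)]
    (σ xhat yhat : ℝ) (hσ : 0 < σ)
    (X Y : Ω → ℝ) (hXY : IndepFun X Y ℙ)
    (hX : Measure.map X ℙ = gaussianReal xhat ⟨σ ^ 2, sq_nonneg σ⟩)
    (hY : Measure.map Y ℙ = gaussianReal yhat ⟨σ ^ 2, sq_nonneg σ⟩)
    (η σn2 d x₀ Rhat P : ℝ)
    (hη : 0 < η) (hσn : 0 < σn2) (hd : 0 < d) (hR : 0 < Rhat) (hP : 0 < P)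
    (hfeas : η * P / (((2 : ℝ) ^ Rhat - 1) * σn2) > d ^ 2) :
    (ℙ {ω | Real.logb 2
        (1 + η * P / ((((X ω) - x₀) ^ 2 + (Y ω) ^ 2 + d ^ 2) * σn2)) < Rhat}).toReal
      = marcumQ (Real.sqrt ((xhat - x₀) ^ 2 + yhat ^ 2) / σ)
          (Real.sqrt (η * P / (((2 : ℝ) ^ Rhat - 1) * σn2) - d ^ 2) / σ) := by
  have hσ' : σ ≠ 0 := hσ.ne'
  -- basic positivity facts
  have h2R : (1:ℝ) < (2:ℝ) ^ Rhat := by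
    rw [Real.one_lt_rpow_iff_of_pos (by norm_num)]
    exact Or.inl ⟨by norm_num, hR⟩
  have ht : 0 < (2:ℝ) ^ Rhat - 1 := by linarith
  set r0 : ℝ := η * P / (((2 : ℝ) ^ Rhat - 1) * σn2) - d ^ 2 with hr0_def
  have hr0 : 0 < r0 := by simp only [hr0_def]; linarith
  set r : ℝ := Real.sqrt r0 with hr_def
  have hr : 0 < r := Real.sqrt_pos.2 hr0
  have hr2 : r ^ 2 = r0 := Real.sq_sqrt hr0.le
  -- Step 1: the event rewrite
  have hevent : {ω | Real.logb 2
        (1 + η * P / ((((X ω) - x₀) ^ 2 + (Y ω) ^ 2 + d ^ 2) * σn2)) < Rhat}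
      = (fun ω => (X ω, Y ω)) ⁻¹' {p : ℝ × ℝ | r0 < (p.1 - x₀) ^ 2 + p.2 ^ 2} := by
    ext ω
    simp only [Set.mem_setOf_eq, Set.mem_preimage]
    set x := X ω; set y := Y ω
    have hS : 0 < (x - x₀) ^ 2 + y ^ 2 + d ^ 2 := by positivity
    have hq : 0 < η * P / (((x - x₀) ^ 2 + y ^ 2 + d ^ 2) * σn2) := by positivity
    rw [Real.logb_lt_iff_lt_rpow (by norm_num) (by linarith)]
    have lhs_iff : (1 + η * P / (((x - x₀) ^ 2 + y ^ 2 + d ^ 2) * σn2) < (2:ℝ) ^ Rhat)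
        ↔ η * P < ((2:ℝ) ^ Rhat - 1) * (((x - x₀) ^ 2 + y ^ 2 + d ^ 2) * σn2) := by
      rw [add_comm, ← lt_sub_iff_add_lt, div_lt_iff₀ (by positivity)]
    have rhs_iff : (r0 < (x - x₀) ^ 2 + y ^ 2)
        ↔ η * P < ((2:ℝ) ^ Rhat - 1) * (((x - x₀) ^ 2 + y ^ 2 + d ^ 2) * σn2) := by
      rw [hr0_def, sub_lt_iff_lt_add, div_lt_iff₀ (by positivity)]
      constructor <;> intro h <;> nlinarith
    exact lhs_iff.trans rhs_iff.symm
  rw [hevent]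
  -- Step 2: AEMeasurability
  have hXm : AEMeasurable X ℙ := by
    by_contra h
    rw [Measure.map_of_not_aemeasurable h] at hX
    exact (@IsProbabilityMeasure.ne_zero _ _ _ (instIsProbabilityMeasureGaussianReal xhat _)) hX.symm
  have hYm : AEMeasurable Y ℙ := by
    by_contra h
    rw [Measure.map_of_not_aemeasurable h] at hY
    exact (@IsProbabilityMeasure.ne_zero _ _ _ (instIsProbabilityMeasureGaussianReal yhat _)) hY.symm
  have hSmeas : MeasurableSet {p : ℝ × ℝ | r0 < (p.1 - x₀) ^ 2 + p.2 ^ 2} := by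
    apply measurableSet_lt measurable_const
    fun_prop
  -- Step 3: probability via the joint law
  rw [← Measure.map_apply_of_aemeasurable (hXm.prodMk hYm) hSmeas,
    (indepFun_iff_map_prod_eq_prod_map_map hXm hYm).1 hXY, hX, hY]
  -- Step 4: standardize
  set v : NNReal := ⟨σ ^ 2, sq_nonneg σ⟩ with hv_def
  have hmap1 : (gaussianReal xhat v).map (fun x => σ⁻¹ * (x + -x₀))
      = gaussianReal (σ⁻¹ * (xhat + -x₀)) 1 := by
    have : (fun x : ℝ => σ⁻¹ * (x + -x₀)) = (fun x => σ⁻¹ * x) ∘ (fun x => x + -x₀) := rfl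
    rw [this, ← Measure.map_map (by fun_prop) (by fun_prop),
      gaussianReal_map_add_const (-x₀), gaussianReal_map_const_mul σ⁻¹]
    congr 1
    ext
    simp only [hv_def, NNReal.coe_mul, NNReal.coe_mk, NNReal.coe_one]
    change σ⁻¹ ^ 2 * σ ^ 2 = 1
    field_simp
  have hmap2 : (gaussianReal yhat v).map (fun y => σ⁻¹ * y)
      = gaussianReal (σ⁻¹ * yhat) 1 := by
    rw [gaussianReal_map_const_mul σ⁻¹]
    congr 1
    ext
    simp only [hv_def, NNReal.coe_mul, NNReal.coe_mk, NNReal.coe_one]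
    change σ⁻¹ ^ 2 * σ ^ 2 = 1
    field_simp
  set T : ℝ × ℝ → ℝ × ℝ := Prod.map (fun x => σ⁻¹ * (x + -x₀)) (fun y => σ⁻¹ * y) with hT
  have hTmeas : Measurable T := by fun_prop
  have hmapT : ((gaussianReal xhat v).prod (gaussianReal yhat v)).map T
      = (gaussianReal (σ⁻¹ * (xhat + -x₀)) 1).prod (gaussianReal (σ⁻¹ * yhat) 1) := by
    rw [← hmap1, ← hmap2, ← Measure.map_prod_map _ _ (by fun_prop) (by fun_prop)]
  have hpre : {p : ℝ × ℝ | r0 < (p.1 - x₀) ^ 2 + p.2 ^ 2}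
      = T ⁻¹' {q : ℝ × ℝ | (r / σ) ^ 2 < q.1 ^ 2 + q.2 ^ 2} := by
    ext ⟨x, y⟩
    simp only [Set.mem_setOf_eq, Set.mem_preimage, hT, Prod.map_apply]
    rw [div_pow, mul_pow, mul_pow, ← hr2]
    rw [show (σ⁻¹:ℝ) ^ 2 = (σ ^ 2)⁻¹ by rw [inv_pow]]
    rw [inv_mul_eq_div, inv_mul_eq_div, ← add_div, div_lt_div_iff_of_pos_right (by positivity)]
    constructor <;> intro h <;> [skip; skip] <;>
      · have : (x + -x₀) ^ 2 = (x - x₀) ^ 2 := by ring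
        rw [this] at *
        linarith
  rw [hpre, ← Measure.map_apply_of_aemeasurable hTmeas.aemeasurable (by
      apply measurableSet_lt measurable_const; fun_prop), hmapT]
  rw [gaussian_prod_tail _ _ _ (by positivity)]
  congr 1
  rw [show (σ⁻¹ * (xhat + -x₀)) ^ 2 + (σ⁻¹ * yhat) ^ 2
        = ((xhat - x₀) ^ 2 + yhat ^ 2) / σ ^ 2 by field_simp; ring,
      Real.sqrt_div (by positivity) _, Real.sqrt_sq hσ.le]
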